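/- arXiv:0901.2744 — 3 statements merged into one kernel-verified Lean document; each statement's English description precedes it below -/
import Mathlib

section
/- (Equational criterion for vanishing in tensor products.) Let S be a commutative ring, M and N S-modules, m₁,…,m_t ∈ M, and n₁,…,n_t a generating set of N. Then Σᵢ mᵢ ⊗ nᵢ = 0 in M ⊗_S N if and only if there exist m'₁,…,m'_s ∈ M and a_{ij} ∈ S such that Σⱼ a_{ij} m'ⱼ = mᵢ for all i, and Σᵢ a_{ij} nᵢ = 0 for all j. -/
open TensorProduct

/-- **Equational criterion for vanishing in tensor products** (Eisenbud, Lemma 6.4).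
Let `S` be a commutative ring, `M`, `N` `S`-modules, `m₁, …, m_t ∈ M` and `n₁, …, n_t`
a generating set of `N`. Then `Σᵢ mᵢ ⊗ nᵢ = 0` in `M ⊗_S N` iff there exist
`m'₁, …, m'_s ∈ M` and `a_{ij} ∈ S` with `Σⱼ a_{ij} m'ⱼ = mᵢ` for all `i` and
`Σᵢ a_{ij} nᵢ = 0` for all `j`. -/
theorem sum_tmul_eq_zero_iff_equational
    (S : Type*) [CommRing S]
    (M N : Type*) [AddCommGroup M] [Module S M] [AddCommGroup N] [Module S N]
    (t : ℕ) (m : Fin t → M) (n : Fin t → N)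
    (hn : Submodule.span S (Set.range n) = ⊤) :
    (∑ i, m i ⊗ₜ[S] n i) = (0 : M ⊗[S] N) ↔
      ∃ (s : ℕ) (m' : Fin s → M) (a : Fin t → Fin s → S),
        (∀ i, ∑ j, a i j • m' j = m i) ∧ (∀ j, ∑ i, a i j • n i = 0) := by
  have hswap : ∑ i, m i ⊗ₜ[S] n i = 0 ↔ ∑ i, n i ⊗ₜ[S] m i = (0 : N ⊗[S] M) := by
    rw [← (TensorProduct.comm S M N).map_eq_zero_iff, map_sum]
    simp only [comm_tmul]
  rw [hswap, ← vanishesTrivially_iff_sum_tmul_eq_zero S hn]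
  constructor
  · rintro ⟨s, a, m', hm, ha⟩
    exact ⟨s, m', a, fun i => (hm i).symm, ha⟩
  · rintro ⟨s, m', a, hm, ha⟩
    exact ⟨s, a, m', fun i => (hm i).symm, ha⟩
end

section
/- Let S be a commutative ring, M and N S-modules, g, h ∈ S, and suppose m ∈ M ⊗_S N lies in the image of gM ⊗_S hN → M ⊗_S N. If m is zero in M ⊗_S N, then (g·h)·m' = 0 in gM ⊗_S hN, where m' ∈ gM ⊗_S hN is any preimage of m. -/
open TensorProduct

/-- Let `S` be a commutative ring, `M`, `N` `S`-modules and `g, h ∈ S`. If an element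
`m'` of `gM ⊗_S hN` maps to `0` under the natural map `gM ⊗_S hN → M ⊗_S N` induced by
the inclusions, then `(g·h) • m' = 0` in `gM ⊗_S hN`. -/
theorem smul_eq_zero_of_image_eq_zero
    (S : Type*) [CommRing S]
    (M N : Type*) [AddCommGroup M] [Module S M] [AddCommGroup N] [Module S N]
    (g h : S)
    (m' : ↥(LinearMap.range (LinearMap.lsmul S M g)) ⊗[S]
          ↥(LinearMap.range (LinearMap.lsmul S N h)))
    (h0 : TensorProduct.map (LinearMap.range (LinearMap.lsmul S M g)).subtype
            ((LinearMap.range (LinearMap.lsmul S N h)).subtype) m' = 0) :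
    (g * h) • m' = 0 := by
  have key : ∀ z : ↥(LinearMap.range (LinearMap.lsmul S M g)) ⊗[S]
          ↥(LinearMap.range (LinearMap.lsmul S N h)), (g * h) • z =
      (TensorProduct.map (LinearMap.lsmul S M g).rangeRestrict
        (LinearMap.lsmul S N h).rangeRestrict)
      (TensorProduct.map (LinearMap.range (LinearMap.lsmul S M g)).subtype
        ((LinearMap.range (LinearMap.lsmul S N h)).subtype) z) := by
    intro z
    induction z using TensorProduct.induction_on with
    | zero => simp
    | tmul x y =>
      simp only [map_tmul]
      rw [mul_smul, ← tmul_smul, smul_tmul']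
      rfl
    | add a b ha hb =>
      simp only [map_add, smul_add, ha, hb]
  rw [key m', h0, map_zero]
end

section
/- Let R be a commutative ring, K ⊆ F an inclusion of R-modules such that F/K is flat and such that for every R-module P the map K ⊗_R P → F ⊗_R P is injective. Then for all i ≥ 1, the induced map K^{⊗i} → F^{⊗i} on i-fold tensor powers over R is injective. -/
universe u v

universe w x

open TensorProduct LinearMap PiTensorProduct

section Pure

theorem flat_quotient_pure_aux (R : Type u) [CommRing R]
    (F : Type v) [AddCommGroup F] [Module R F] (K : Submodule R F)
    [Module.Flat R (F ⧸ K)]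
    {P : Type w} [AddCommGroup P] [Module R P]
    {Q : Type x} [AddCommGroup Q] [Module R Q] [Module.Flat R Q]
    (q : Q →ₗ[R] P) (hqs : Function.Surjective q) :
    Function.Injective (LinearMap.rTensor P K.subtype) := by
  rw [← LinearMap.ker_eq_bot, eq_bot_iff]
  intro x hx
  simp only [LinearMap.mem_ker] at hx
  set S := LinearMap.ker q
  set i := K.subtype
  set π := K.mkQ
  obtain ⟨y, rfl⟩ := LinearMap.lTensor_surjective (Q := K) hqs x
  have h1 : lTensor F q (rTensor Q i y) = 0 := by
    have comm : lTensor F q ∘ₗ rTensor Q i = rTensor P i ∘ₗ lTensor K q := by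
      rw [lTensor_comp_rTensor, rTensor_comp_lTensor]
    calc lTensor F q (rTensor Q i y)
        = (lTensor F q ∘ₗ rTensor Q i) y := rfl
      _ = (rTensor P i ∘ₗ lTensor K q) y := by rw [comm]
      _ = 0 := hx
  have hex1 : Function.Exact (lTensor F S.subtype) (lTensor F q) :=
    lTensor_exact F (LinearMap.exact_subtype_ker_map q) hqs
  obtain ⟨z, hz⟩ := (hex1 (rTensor Q i y)).mp h1
  have h2 : lTensor (F ⧸ K) S.subtype (rTensor S π z) = 0 := by
    have comm : lTensor (F ⧸ K) S.subtype ∘ₗ rTensor S π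
        = rTensor Q π ∘ₗ lTensor F S.subtype := by
      rw [lTensor_comp_rTensor, rTensor_comp_lTensor]
    have hπi : π ∘ₗ i = 0 := by ext k; simp [π, i]
    calc lTensor (F ⧸ K) S.subtype (rTensor S π z)
        = (rTensor Q π ∘ₗ lTensor F S.subtype) z := by
          rw [← comm]; rfl
      _ = rTensor Q π (rTensor Q i y) := by
          simp only [LinearMap.comp_apply, hz]
      _ = (rTensor Q π ∘ₗ rTensor Q i) y := rfl
      _ = rTensor Q (π ∘ₗ i) y := by rw [rTensor_comp]
      _ = 0 := by rw [hπi, rTensor_zero]; rfl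
  have h3 : rTensor S π z = 0 :=
    Module.Flat.lTensor_preserves_injective_linearMap (M := F ⧸ K) S.subtype
      S.injective_subtype h2
  have hex2 : Function.Exact (rTensor S i) (rTensor S π) :=
    rTensor_exact S (LinearMap.exact_subtype_mkQ K) K.mkQ_surjective
  obtain ⟨w, hw⟩ := (hex2 z).mp h3
  have h4 : rTensor Q i (y - lTensor K S.subtype w) = 0 := by
    have comm : rTensor Q i ∘ₗ lTensor K S.subtype
        = lTensor F S.subtype ∘ₗ rTensor S i := by
      rw [lTensor_comp_rTensor, rTensor_comp_lTensor]
    have h7 : rTensor Q i (lTensor K S.subtype w)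
        = lTensor F S.subtype (rTensor S i w) := LinearMap.congr_fun comm w
    rw [map_sub, h7, hw, ← hz, sub_self]
  have h5 : y = lTensor K S.subtype w := by
    have := Module.Flat.rTensor_preserves_injective_linearMap (M := Q) i
      K.injective_subtype (a₁ := y - lTensor K S.subtype w) (a₂ := 0)
      (by rw [h4, map_zero])
    exact sub_eq_zero.mp this
  have h6 : q ∘ₗ S.subtype = 0 := by
    ext s; exact s.2
  rw [h5, Submodule.mem_bot]
  calc lTensor K q (lTensor K S.subtype w) = (lTensor K q ∘ₗ lTensor K S.subtype) w := rfl
    _ = lTensor K (q ∘ₗ S.subtype) w := by rw [lTensor_comp]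
    _ = 0 := by rw [h6, lTensor_zero]; rfl

theorem flat_quotient_pure (R : Type u) [CommRing R]
    (F : Type v) [AddCommGroup F] [Module R F] (K : Submodule R F)
    [Module.Flat R (F ⧸ K)]
    (P : Type w) [AddCommGroup P] [Module R P] :
    Function.Injective (LinearMap.rTensor P K.subtype) :=
  flat_quotient_pure_aux R F K (Finsupp.linearCombination R (_root_.id : P → P))
    (Finsupp.linearCombination_id_surjective R P)

end Pure

section Conj

variable {R : Type u} [CommRing R]

lemma inj_square {A B A' B' : Type*} [AddCommMonoid A] [Module R A] [AddCommMonoid B] [Module R B]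
    [AddCommMonoid A'] [Module R A'] [AddCommMonoid B'] [Module R B']
    (eA : A ≃ₗ[R] A') (eB : B ≃ₗ[R] B') {f : A →ₗ[R] B} {f' : A' →ₗ[R] B'}
    (h : eB.toLinearMap ∘ₗ f = f' ∘ₗ eA.toLinearMap) (hf' : Function.Injective f') :
    Function.Injective f := by
  intro a b hab
  have e1 := LinearMap.congr_fun h a
  have e2 := LinearMap.congr_fun h b
  simp only [LinearMap.coe_comp, Function.comp_apply, LinearEquiv.coe_coe] at e1 e2
  exact eA.injective (hf' (by rw [← e1, ← e2, hab]))

lemma inj_square' {A B A' B' : Type*} [AddCommMonoid A] [Module R A] [AddCommMonoid B] [Module R B]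
    [AddCommMonoid A'] [Module R A'] [AddCommMonoid B'] [Module R B']
    (eA : A' ≃ₗ[R] A) (eB : B' ≃ₗ[R] B) {f : A →ₗ[R] B} {f' : A' →ₗ[R] B'}
    (h : f ∘ₗ eA.toLinearMap = eB.toLinearMap ∘ₗ f') (hf' : Function.Injective f') :
    Function.Injective f := by
  intro a b hab
  have e1 := LinearMap.congr_fun h (eA.symm a)
  have e2 := LinearMap.congr_fun h (eA.symm b)
  simp only [LinearMap.coe_comp, Function.comp_apply, LinearEquiv.coe_coe,
    LinearEquiv.apply_symm_apply] at e1 e2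
  have : eA.symm a = eA.symm b := hf' (eB.injective (by rw [← e1, ← e2, hab]))
  exact eA.symm.injective this

lemma inj_square_rTensor {A B A' B' : Type*} [AddCommMonoid A] [Module R A] [AddCommMonoid B]
    [Module R B] [AddCommMonoid A'] [Module R A'] [AddCommMonoid B'] [Module R B']
    (P : Type*) [AddCommMonoid P] [Module R P]
    (eA : A ≃ₗ[R] A') (eB : B ≃ₗ[R] B') {f : A →ₗ[R] B} {f' : A' →ₗ[R] B'}
    (h : eB.toLinearMap ∘ₗ f = f' ∘ₗ eA.toLinearMap)
    (hf' : Function.Injective (rTensor P f')) :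
    Function.Injective (rTensor P f) := by
  have hsq : rTensor P eB.toLinearMap ∘ₗ rTensor P f
      = rTensor P f' ∘ₗ rTensor P eA.toLinearMap := by
    rw [← rTensor_comp, h, rTensor_comp]
  exact inj_square (LinearEquiv.rTensor P eA) (LinearEquiv.rTensor P eB) hsq hf'

end Conj

section Main

variable {R : Type u} [CommRing R]

/-- The equivalence `M^{⊗(i+1)} ≃ M^{⊗i} ⊗ M`. -/
noncomputable def tpowSuccEquiv (i : ℕ) (M : Type*) [AddCommGroup M] [Module R M] :
    (⨂[R] _ : Fin (i+1), M) ≃ₗ[R] (⨂[R] _ : Fin i, M) ⊗[R] M :=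
  ((reindex R (fun _ : Fin (i+1) => M) finSumFinEquiv.symm).trans
    (tmulEquiv (ι := Fin i) (ι₂ := Fin 1) R M).symm).trans
    (TensorProduct.congr (LinearEquiv.refl R _) (subsingletonEquiv (0 : Fin 1)))

lemma tpowSuccEquiv_natural (i : ℕ) {M N : Type*} [AddCommGroup M] [Module R M]
    [AddCommGroup N] [Module R N] (φ : M →ₗ[R] N) :
    (tpowSuccEquiv i N).toLinearMap ∘ₗ PiTensorProduct.map (fun _ : Fin (i+1) => φ)
      = (TensorProduct.map (PiTensorProduct.map fun _ : Fin i => φ) φ) ∘ₗ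
        (tpowSuccEquiv i M).toLinearMap := by
  ext f
  simp [tpowSuccEquiv, TensorProduct.map_tmul]

lemma tpowZero_natural {M N : Type*} [AddCommGroup M] [Module R M]
    [AddCommGroup N] [Module R N] (φ : M →ₗ[R] N) :
    (isEmptyEquiv (Fin 0) (R := R) (s := fun _ => N)).toLinearMap ∘ₗ
        PiTensorProduct.map (fun _ : Fin 0 => φ)
      = LinearMap.id ∘ₗ (isEmptyEquiv (Fin 0) (R := R) (s := fun _ => M)).toLinearMap := by
  ext f
  simp

end Main

section Induction

variable (R : Type u) [CommRing R]
    (F : Type v) [AddCommGroup F] [Module R F] (K : Submodule R F)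
    [Module.Flat R (F ⧸ K)]

theorem tpow_rTensor_injective (i : ℕ) :
    ∀ (P : Type (max u v)) [AddCommGroup P] [Module R P],
      Function.Injective
        (rTensor P (PiTensorProduct.map (fun _ : Fin i => K.subtype))) := by
  induction i with
  | zero =>
    intro P _ _
    exact inj_square_rTensor P (isEmptyEquiv (Fin 0)) (isEmptyEquiv (Fin 0))
      (tpowZero_natural K.subtype) (by rw [rTensor_id]; exact fun a b h => h)
  | succ i ih =>
    intro P _ _
    refine inj_square_rTensor P (tpowSuccEquiv i (↥K)) (tpowSuccEquiv i F)
      (tpowSuccEquiv_natural i K.subtype) ?_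
    rw [← rTensor_comp_lTensor, rTensor_comp, LinearMap.coe_comp]
    refine Function.Injective.comp ?_ ?_
    · -- rTensor P (rTensor F mapᵢ) injective, via assoc and ih
      refine inj_square
        (TensorProduct.assoc R (⨂[R] _ : Fin i, K) F P)
        (TensorProduct.assoc R (⨂[R] _ : Fin i, F) F P)
        (f' := rTensor (F ⊗[R] P) (PiTensorProduct.map (fun _ : Fin i => K.subtype)))
        ?_ (ih (F ⊗[R] P))
      ext t f p
      simp
    · -- rTensor P (lTensor T incl) injective, via comm, assoc, purity
      refine inj_square_rTensor P
        (TensorProduct.comm R (⨂[R] _ : Fin i, K) K)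
        (TensorProduct.comm R (⨂[R] _ : Fin i, K) F)
        (f' := rTensor (⨂[R] _ : Fin i, (↥K)) K.subtype) ?_ ?_
      · ext t k
        simp
      · refine inj_square
          (TensorProduct.assoc R K (⨂[R] _ : Fin i, K) P)
          (TensorProduct.assoc R F (⨂[R] _ : Fin i, K) P)
          (f' := rTensor ((⨂[R] _ : Fin i, K) ⊗[R] P) K.subtype) ?_
          (flat_quotient_pure R F K ((⨂[R] _ : Fin i, (↥K)) ⊗[R] P))
        ext k t p
        simp

theorem tpow_map_injective (i : ℕ) :
    Function.Injective (PiTensorProduct.map (fun _ : Fin i => K.subtype)) := by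
  intro a b hab
  have h1 : rTensor (ULift.{v} R) (PiTensorProduct.map (fun _ : Fin i => K.subtype))
        (a ⊗ₜ ULift.up 1)
      = rTensor (ULift.{v} R) (PiTensorProduct.map (fun _ : Fin i => K.subtype))
        (b ⊗ₜ ULift.up 1) := by
    simp only [rTensor_tmul, hab]
  have h2 := tpow_rTensor_injective R F K i (ULift.{v} R) h1
  have h3 := congrArg (fun z => (TensorProduct.rid R (⨂[R] _ : Fin i, (↥K)))
    ((lTensor (⨂[R] _ : Fin i, (↥K)) (ULift.moduleEquiv (R := R) (M := R)).toLinearMap) z)) h2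
  simpa using h3

end Induction


/-- Let `R` be a commutative ring and `K ⊆ F` an inclusion of `R`-modules such that
`F/K` is flat and such that for every `R`-module `P` the map `K ⊗_R P → F ⊗_R P` is
injective. Then for all `i ≥ 1`, the induced map `K^{⊗i} → F^{⊗i}` on `i`-fold tensor
powers over `R` is injective. -/
theorem tensorPower_inclusion_injective
    (R : Type u) [CommRing R]
    (F : Type v) [AddCommGroup F] [Module R F] (K : Submodule R F)
    [Module.Flat R (F ⧸ K)]
    (hinj : ∀ (P : Type v) [AddCommGroup P] [Module R P],
      Function.Injective (LinearMap.rTensor P K.subtype))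
    (i : ℕ) (hi : 1 ≤ i) :
    Function.Injective (PiTensorProduct.map (fun _ : Fin i => K.subtype)) :=
  tpow_map_injective R F K i
end
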